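/- Let p ∈ (1, ∞) with conjugate exponent q. If H^{n₁} ⊆ S_p^{n₁} is a τ₁-hitting set (τ₁ > 0) and H^{n₂} ⊆ S_p^{n₂} is a τ₂-hitting set (τ₂ > 0), then the set (H^{n₁} ∨ 0_{n₂}) ∪ (0_{n₁} ∨ H^{n₂}) of appended vectors is a hitting set of S_p^{n₁+n₂} with hitting ratio τ₁τ₂ / (τ₁^q + τ₂^q)^{1/q}. -/

import Mathlib

open scoped BigOperators

/-- The vector `ℓ_p`-norm for finite `p`. -/
noncomputable def pNorm (p : ℝ) {ι : Type*} [Fintype ι] (x : ι → ℝ) : ℝ :=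
  (∑ i, |x i| ^ p) ^ (1 / p)

/-- `H` is a hitting set of the `ℓ_p`-sphere with hitting ratio `τ`: every vector of `H`
lies on the `ℓ_p`-sphere, and every `x` on the `ℓ_q`-sphere satisfies `xᵀv ≥ τ` for some
`v ∈ H`. -/
def IsHittingSet (p q τ : ℝ) {ι : Type*} [Fintype ι] (H : Set (ι → ℝ)) : Prop :=
  (∀ v ∈ H, pNorm p v = 1) ∧
    ∀ x : ι → ℝ, pNorm q x = 1 → ∃ v ∈ H, τ ≤ ∑ i, x i * v i

/-! Split `x ∈ S_q^(n₁+n₂)` into blocks `x₁, x₂` with `a = ‖x₁‖_q`, `b = ‖x₂‖_q`, so that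
`a^q + b^q = 1`. Since `a^q T + b^q T = T = τ₁^q + τ₂^q` for `T = τ₁^q + τ₂^q`, either `τ₂^q ≤ a^q T` or
`τ₁^q ≤ b^q T`; in the first case the hitting set `H₁`, applied to `x₁ / a`, yields
`v` with `xᵀ(v ∨ 0) ≥ τ₁ a ≥ τ₁τ₂ / T^{1/q}`, and the second case is symmetric. -/

section pNorm

variable {ι κ : Type*} [Fintype ι] [Fintype κ] {p : ℝ}

lemma pNorm_nonneg (p : ℝ) (x : ι → ℝ) : 0 ≤ pNorm p x := by
  unfold pNorm
  positivity

lemma pNorm_rpow (hp : p ≠ 0) (x : ι → ℝ) : pNorm p x ^ p = ∑ i, |x i| ^ p := by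
  rw [pNorm, one_div, Real.rpow_inv_rpow (by positivity) hp]

lemma pNorm_smul (hp : p ≠ 0) (c : ℝ) (x : ι → ℝ) : pNorm p (c • x) = |c| * pNorm p x := by
  simp only [pNorm, Pi.smul_apply, smul_eq_mul, abs_mul,
    Real.mul_rpow (abs_nonneg c) (abs_nonneg _), ← Finset.mul_sum]
  rw [Real.mul_rpow (by positivity) (by positivity), one_div,
    Real.rpow_rpow_inv (abs_nonneg c) hp]

lemma pNorm_rpow_sum_type (hp : p ≠ 0) (x : ι ⊕ κ → ℝ) :
    pNorm p x ^ p = pNorm p (x ∘ Sum.inl) ^ p + pNorm p (x ∘ Sum.inr) ^ p := by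
  simp only [pNorm_rpow hp, Fintype.sum_sum_type, Function.comp_apply]

lemma pNorm_sumElim_zero (hp : p ≠ 0) (v : ι → ℝ) :
    pNorm p (Sum.elim v (0 : κ → ℝ)) = pNorm p v := by
  simp [pNorm, Fintype.sum_sum_type, Real.zero_rpow hp]

lemma pNorm_zero_sumElim (hp : p ≠ 0) (w : κ → ℝ) :
    pNorm p (Sum.elim (0 : ι → ℝ) w) = pNorm p w := by
  simp [pNorm, Fintype.sum_sum_type, Real.zero_rpow hp]

end pNorm

lemma IsHittingSet.exists_mul_pNorm_le {p q τ : ℝ} {ι : Type*} [Fintype ι] {H : Set (ι → ℝ)}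
    (hH : IsHittingSet p q τ H) (hq : q ≠ 0) {x : ι → ℝ} (hx : 0 < pNorm q x) :
    ∃ v ∈ H, τ * pNorm q x ≤ ∑ i, x i * v i := by
  have hunit : pNorm q ((pNorm q x)⁻¹ • x) = 1 := by
    rw [pNorm_smul hq, abs_of_pos (inv_pos.mpr hx), inv_mul_cancel₀ hx.ne']
  obtain ⟨v, hv, hτ⟩ := hH.2 _ hunit
  refine ⟨v, hv, ?_⟩
  simp only [Pi.smul_apply, smul_eq_mul, mul_assoc, ← Finset.mul_sum] at hτ
  rwa [le_inv_mul_iff₀ hx, mul_comm] at hτ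

lemma div_rpow_inv_le_of_rpow_le_mul {q τ a T : ℝ} (hq : 0 < q) (hτ : 0 ≤ τ) (ha : 0 ≤ a)
    (hT : 0 < T) (h : τ ^ q ≤ a ^ q * T) : τ / T ^ (1 / q) ≤ a := by
  have hTq : 0 < T ^ (1 / q) := by positivity
  rw [← Real.rpow_le_rpow_iff (by positivity) ha hq,
    Real.div_rpow hτ hTq.le, one_div, Real.rpow_inv_rpow hT.le hq.ne', div_le_iff₀ hT]
  exact h

lemma le_mul_or_le_mul_of_rpow_add_rpow_eq_one {q τ₁ τ₂ a b : ℝ} (hq : 0 < q)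
    (hτ₁ : 0 < τ₁) (hτ₂ : 0 < τ₂) (ha : 0 ≤ a) (hb : 0 ≤ b) (hab : a ^ q + b ^ q = 1) :
    τ₁ * τ₂ / (τ₁ ^ q + τ₂ ^ q) ^ (1 / q) ≤ τ₁ * a ∨
      τ₁ * τ₂ / (τ₁ ^ q + τ₂ ^ q) ^ (1 / q) ≤ τ₂ * b := by
  have hT : 0 < τ₁ ^ q + τ₂ ^ q := by positivity
  rcases le_or_gt (τ₂ ^ q) (a ^ q * (τ₁ ^ q + τ₂ ^ q)) with h | h
  · left
    rw [mul_div_assoc]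
    exact mul_le_mul_of_nonneg_left
      (div_rpow_inv_le_of_rpow_le_mul hq hτ₂.le ha hT h) hτ₁.le
  · right
    have h' : τ₁ ^ q ≤ b ^ q * (τ₁ ^ q + τ₂ ^ q) := by
      rw [← sub_eq_of_eq_add' hab.symm, sub_mul, one_mul]
      linarith
    rw [mul_comm τ₁, mul_div_assoc]
    exact mul_le_mul_of_nonneg_left
      (div_rpow_inv_le_of_rpow_le_mul hq hτ₁.le hb hT h') hτ₂.le

/-- If `H₁ ⊆ S_p^(n₁)` is a `τ₁`-hitting set and `H₂ ⊆ S_p^(n₂)` is a `τ₂`-hitting set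
(`τ₁, τ₂ > 0`), then `(H₁ ∨ 0) ∪ (0 ∨ H₂)` is a hitting set of `S_p^(n₁+n₂)` with hitting
ratio `τ₁τ₂ / (τ₁^q + τ₂^q)^(1/q)`. -/
theorem stmt8 (p q τ₁ τ₂ : ℝ) (hp : 1 < p) (hpq : 1 / p + 1 / q = 1)
    (hτ₁ : 0 < τ₁) (hτ₂ : 0 < τ₂) (n₁ n₂ : ℕ)
    (H₁ : Set (Fin n₁ → ℝ)) (H₂ : Set (Fin n₂ → ℝ))
    (hH₁ : IsHittingSet p q τ₁ H₁) (hH₂ : IsHittingSet p q τ₂ H₂) :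
    IsHittingSet p q (τ₁ * τ₂ / (τ₁ ^ q + τ₂ ^ q) ^ (1 / q))
      (((fun v => Sum.elim v 0) '' H₁ ∪ (fun w => Sum.elim 0 w) '' H₂ :
        Set (Fin n₁ ⊕ Fin n₂ → ℝ))) := by
  have hpq' : p.HolderConjugate q :=
    Real.holderConjugate_iff.mpr ⟨hp, by simpa only [one_div] using hpq⟩
  have hq : 0 < q := hpq'.symm.pos
  refine ⟨?_, fun x hx => ?_⟩
  · rintro _ (⟨v, hv, rfl⟩ | ⟨w, hw, rfl⟩)
    · rw [pNorm_sumElim_zero hpq'.pos.ne', hH₁.1 v hv]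
    · rw [pNorm_zero_sumElim hpq'.pos.ne', hH₂.1 w hw]
  have hsplit := pNorm_rpow_sum_type hq.ne' x
  rw [hx, Real.one_rpow] at hsplit
  have hbound_pos : 0 < τ₁ * τ₂ / (τ₁ ^ q + τ₂ ^ q) ^ (1 / q) := by positivity
  rcases le_mul_or_le_mul_of_rpow_add_rpow_eq_one hq hτ₁ hτ₂ (pNorm_nonneg _ _)
      (pNorm_nonneg _ _) hsplit.symm with h | h
  · obtain ⟨v, hv, hvx⟩ := hH₁.exists_mul_pNorm_le hq.ne'
      (pos_of_mul_pos_right (hbound_pos.trans_le h) hτ₁.le)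
    refine ⟨Sum.elim v 0, Or.inl ⟨v, hv, rfl⟩, h.trans ?_⟩
    simpa [Fintype.sum_sum_type] using hvx
  · obtain ⟨w, hw, hwx⟩ := hH₂.exists_mul_pNorm_le hq.ne'
      (pos_of_mul_pos_right (hbound_pos.trans_le h) hτ₂.le)
    refine ⟨Sum.elim 0 w, Or.inr ⟨w, hw, rfl⟩, h.trans ?_⟩
    simpa [Fintype.sum_sum_type] using hwx
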